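/- For positive semidefinite matrices A and B whose support projections Π_A and Π_B commute, the generalized geometric means satisfy: M(B⁺, A⁺) is the Moore–Penrose pseudoinverse of M(A,B). -/

import Mathlib

open scoped ComplexOrder

open Classical in
/-- The unique positive semidefinite square root of a positive semidefinite matrix
(junk value 0 otherwise). -/
noncomputable def psqrt {n : Type*} [Fintype n] [DecidableEq n] (X : Matrix n n ℂ) :
    Matrix n n ℂ :=
  if h : X.PosSemidef then
    (h.1.eigenvectorUnitary : Matrix n n ℂ) *
      Matrix.diagonal ((↑) ∘ Real.sqrt ∘ h.1.eigenvalues) *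
      (star h.1.eigenvectorUnitary : Matrix n n ℂ)
  else 0

/-- The range (support) of a matrix, i.e. the orthogonal complement of its kernel. -/
noncomputable def msupp {n : Type*} [Fintype n] [DecidableEq n] (X : Matrix n n ℂ) :
    Submodule ℂ (EuclideanSpace ℂ n) :=
  (LinearMap.ker (Matrix.toEuclideanLin X))ᗮ

/-- The kernel of a matrix, as a subspace of Euclidean space. -/
noncomputable def mker {n : Type*} [Fintype n] [DecidableEq n] (X : Matrix n n ℂ) :
    Submodule ℂ (EuclideanSpace ℂ n) :=
  LinearMap.ker (Matrix.toEuclideanLin X)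

/-- The generalized geometric mean M(A,B) = √A · √(√(A⁺) B √(A⁺)) · √A, where Ap
stands for the Moore–Penrose pseudoinverse A⁺ of A. -/
noncomputable def geoMean {n : Type*} [Fintype n] [DecidableEq n]
    (A Ap B : Matrix n n ℂ) : Matrix n n ℂ :=
  psqrt A * psqrt (psqrt Ap * B * psqrt Ap) * psqrt A

open Matrix in
/-- `Ap` is the Moore–Penrose pseudoinverse of `A` (the four Penrose conditions). -/
def IsMPInv {n : Type*} [Fintype n] [DecidableEq n] (A Ap : Matrix n n ℂ) : Prop :=
  A * Ap * A = A ∧ Ap * A * Ap = Ap ∧ (A * Ap)ᴴ = A * Ap ∧ (Ap * A)ᴴ = Ap * A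

/-!
Write `a = √A`, `b = √B`, `a' = √(A⁺)`, `b' = √(B⁺)` and `C = a' b`. Then `a'` and `b'` are the
Moore–Penrose inverses of `a` and `b`, `Π_A = a a'`, `Π_B = b b'`, and
`M(A,B) = a |C*| a`, `M(B⁺,A⁺) = b' |C| b'` with `|C| = √(C*C)`. Commutation of `Π_A` and `Π_B`
gives `C b' a C = C` and makes `a C b' = Π_A Π_B` Hermitian. For any `C` and Hermitian `u`, `v`
with these two properties, `v |C| v` is the Moore–Penrose inverse of `u |C*| u`: both products
equal `u C v`, as follows from `|C*| = C |C|⁺ C*`, `|C| = C*C |C|⁺` and `C |C|⁺ |C| = C`.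
-/

open Matrix

theorem Matrix.mul_eq_zero_of_conjTranspose_mul_self_mul_eq_zero {𝕜 m n l : Type*} [RCLike 𝕜]
    [Fintype m] [Fintype n] {C : Matrix m n 𝕜} {R : Matrix n l 𝕜} (h : Cᴴ * C * R = 0) :
    C * R = 0 := by
  rw [← conjTranspose_mul_self_eq_zero, conjTranspose_mul,
    show Rᴴ * Cᴴ * (C * R) = Rᴴ * (Cᴴ * C * R) by simp only [Matrix.mul_assoc], h,
    Matrix.mul_zero]

section

variable {n : Type*} [Fintype n] [DecidableEq n]

namespace IsMPInv

variable {A Ap : Matrix n n ℂ}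

theorem symm (h : IsMPInv A Ap) : IsMPInv Ap A :=
  ⟨h.2.1, h.1, h.2.2.2, h.2.2.1⟩

theorem conjTranspose (h : IsMPInv A Ap) : IsMPInv Aᴴ Apᴴ := by
  obtain ⟨h₁, h₂, h₃, h₄⟩ := h
  refine ⟨?_, ?_, ?_, ?_⟩
  · simpa only [conjTranspose_mul, mul_assoc] using congrArg (·ᴴ) h₁
  · simpa only [conjTranspose_mul, mul_assoc] using congrArg (·ᴴ) h₂
  · rw [← conjTranspose_mul, h₄, h₄]
  · rw [← conjTranspose_mul, h₃, h₃]

theorem unique {X Y : Matrix n n ℂ} (hX : IsMPInv A X) (hY : IsMPInv A Y) : X = Y := by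
  obtain ⟨hX₁, hX₂, hX₃, hX₄⟩ := hX
  obtain ⟨hY₁, hY₂, hY₃, hY₄⟩ := hY
  have left : A * X = A * Y := calc
    A * X = (A * Y * A * X)ᴴ := by rw [hY₁, hX₃]
    _ = (A * X)ᴴ * (A * Y)ᴴ := by simp only [conjTranspose_mul, mul_assoc]
    _ = A * Y := by rw [hX₃, hY₃, ← mul_assoc, hX₁]
  have right : X * A = Y * A := calc
    X * A = (X * (A * Y * A))ᴴ := by rw [hY₁, hX₄]
    _ = (Y * A)ᴴ * (X * A)ᴴ := by simp only [conjTranspose_mul, mul_assoc]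
    _ = Y * A := by rw [hX₄, hY₄, mul_assoc, ← mul_assoc A, hX₁]
  calc X = X * A * X := hX₂.symm
    _ = Y * A * Y := by rw [right, mul_assoc, left, ← mul_assoc]
    _ = Y := hY₂

theorem isHermitian (hA : A.IsHermitian) (h : IsMPInv A Ap) : Ap.IsHermitian := by
  have h' := h.conjTranspose
  rw [hA.eq] at h'
  exact h'.unique h

theorem posSemidef (hA : A.PosSemidef) (h : IsMPInv A Ap) : Ap.PosSemidef := by
  have hAp : Apᴴ = Ap := h.isHermitian hA.isHermitian
  rw [← h.2.1]
  nth_rewrite 1 [← hAp]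
  exact hA.conjTranspose_mul_mul_same Ap

theorem mul_comm_of_isHermitian (hA : A.IsHermitian) (h : IsMPInv A Ap) : A * Ap = Ap * A := by
  rw [← h.2.2.1, conjTranspose_mul, hA.eq, (h.isHermitian hA).eq]

theorem mul_self_mul_mul_self (h : IsMPInv A Ap) (hc : A * Ap = Ap * A) :
    A * A * (Ap * Ap) = A * Ap := calc
  A * A * (Ap * Ap) = A * (A * Ap) * Ap := by simp only [mul_assoc]
  _ = A * (Ap * A) * Ap := by rw [hc]
  _ = A * Ap := by rw [← mul_assoc, h.1]

theorem mul_self (h : IsMPInv A Ap) (hc : A * Ap = Ap * A) : IsMPInv (A * A) (Ap * Ap) := by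
  have hE := h.mul_self_mul_mul_self hc
  have hE' := h.symm.mul_self_mul_mul_self hc.symm
  refine ⟨?_, ?_, ?_, ?_⟩
  · rw [hE, ← mul_assoc, h.1]
  · rw [hE', ← mul_assoc, h.2.1]
  · rw [hE, h.2.2.1]
  · rw [hE', h.2.2.2]

end IsMPInv

theorem Matrix.IsHermitian.isMPInv_cfc_inv {A : Matrix n n ℂ} (hA : A.IsHermitian) :
    IsMPInv A (cfc (·⁻¹ : ℝ → ℝ) A) := by
  have hmul (f g : ℝ → ℝ) : cfc f A * cfc g A = cfc (fun x => f x * g x) A :=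
    (cfc_mul f g A (A.finite_real_spectrum.continuousOn f)
      (A.finite_real_spectrum.continuousOn g)).symm
  have hid : cfc (fun x : ℝ => x) A = A := cfc_id' ℝ A
  have hL : A * cfc (·⁻¹ : ℝ → ℝ) A = cfc (fun x : ℝ => x * x⁻¹) A := by rw [← hmul, hid]
  have hR : cfc (·⁻¹ : ℝ → ℝ) A * A = cfc (fun x : ℝ => x⁻¹ * x) A := by rw [← hmul, hid]
  refine ⟨?_, ?_, by rw [hL]; exact IsSelfAdjoint.cfc, by rw [hR]; exact IsSelfAdjoint.cfc⟩
  · calc A * cfc (·⁻¹ : ℝ → ℝ) A * A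
        = cfc (fun x : ℝ => x) A * cfc (·⁻¹ : ℝ → ℝ) A * cfc (fun x : ℝ => x) A := by rw [hid]
      _ = cfc (fun x : ℝ => x) A := by
        rw [hmul, hmul]
        exact cfc_congr fun x _ => mul_inv_mul_cancel x
      _ = A := hid
  · rw [hR, hmul]
    exact cfc_congr fun x _ => by simpa using mul_inv_mul_cancel x⁻¹

section psqrt

open scoped MatrixOrder

variable {X : Matrix n n ℂ}

theorem psqrt_eq_sqrt (hX : X.PosSemidef) : psqrt X = CFC.sqrt X := by
  rw [psqrt, dif_pos hX, CFC.sqrt_eq_real_sqrt X hX.nonneg, cfcₙ_eq_cfc, hX.isHermitian.cfc_eq]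
  rfl

theorem Matrix.PosSemidef.psqrt (hX : X.PosSemidef) : (psqrt X).PosSemidef := by
  rw [psqrt_eq_sqrt hX]
  exact (CFC.sqrt_nonneg X).posSemidef

theorem psqrt_mul_psqrt (hX : X.PosSemidef) : psqrt X * psqrt X = X := by
  rw [psqrt_eq_sqrt hX]
  exact CFC.sqrt_mul_sqrt_self X hX.nonneg

theorem psqrt_mul_self (hX : X.PosSemidef) : psqrt (X * X) = X := by
  rw [psqrt_eq_sqrt hX.isHermitian.isSelfAdjoint.mul_self_nonneg.posSemidef,
    CFC.sqrt_mul_self X hX.nonneg]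

end psqrt

namespace IsMPInv

variable {A Ap : Matrix n n ℂ}

theorem psqrt (hA : A.PosSemidef) (h : IsMPInv A Ap) : IsMPInv (psqrt A) (psqrt Ap) := by
  have ha := hA.psqrt
  have ha' := ha.isHermitian.isMPInv_cfc_inv
  have hsq := ha'.mul_self (ha'.mul_comm_of_isHermitian ha.isHermitian)
  rw [psqrt_mul_psqrt hA] at hsq
  rwa [h.unique hsq, psqrt_mul_self (ha'.posSemidef ha)]

theorem mul_eq_psqrt_mul_psqrt (hA : A.PosSemidef) (h : IsMPInv A Ap) :
    A * Ap = _root_.psqrt A * _root_.psqrt Ap := by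
  have hs := h.psqrt hA
  rw [← hs.mul_self_mul_mul_self (hs.mul_comm_of_isHermitian hA.psqrt.isHermitian),
    psqrt_mul_psqrt hA, psqrt_mul_psqrt (h.posSemidef hA)]

end IsMPInv

theorem Matrix.range_toEuclideanLin_mul_le {𝕜 : Type*} [RCLike 𝕜] (M N : Matrix n n 𝕜) :
    LinearMap.range (toEuclideanLin (M * N)) ≤ LinearMap.range (toEuclideanLin M) := by
  rw [← coe_toEuclideanCLM_eq_toEuclideanLin, map_mul]
  exact LinearMap.range_comp_le_range _ _

theorem Matrix.IsHermitian.range_toEuclideanLin {A : Matrix n n ℂ} (hA : A.IsHermitian) :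
    LinearMap.range (toEuclideanLin A) = msupp A := by
  rw [msupp, LinearMap.orthogonal_ker, ← toEuclideanLin_conjTranspose_eq_adjoint, hA.eq]

theorem IsStarProjection.eq_of_range_toEuclideanLin_eq {𝕜 : Type*} [RCLike 𝕜] {P Q : Matrix n n 𝕜}
    (hP : IsStarProjection P) (hQ : IsStarProjection Q)
    (h : LinearMap.range (toEuclideanLin P) = LinearMap.range (toEuclideanLin Q)) : P = Q :=
  EquivLike.injective toEuclideanCLM <|
    ContinuousLinearMap.IsStarProjection.ext (hP.map toEuclideanCLM) (hQ.map toEuclideanCLM) <| by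
      rwa [coe_toEuclideanCLM_eq_toEuclideanLin, coe_toEuclideanCLM_eq_toEuclideanLin]

namespace IsMPInv

variable {A Ap : Matrix n n ℂ}

theorem isStarProjection_mul (h : IsMPInv A Ap) : IsStarProjection (A * Ap) :=
  ⟨by rw [IsIdempotentElem, ← mul_assoc, h.1], h.2.2.1⟩

theorem range_toEuclideanLin_mul (h : IsMPInv A Ap) :
    LinearMap.range (toEuclideanLin (A * Ap)) = LinearMap.range (toEuclideanLin A) := by
  refine le_antisymm (range_toEuclideanLin_mul_le A Ap) ?_
  nth_rewrite 1 [← h.1]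
  exact range_toEuclideanLin_mul_le _ A

theorem mul_eq_of_range_eq_msupp {P : Matrix n n ℂ} (hA : A.IsHermitian) (h : IsMPInv A Ap)
    (hP : IsStarProjection P) (hr : LinearMap.range (toEuclideanLin P) = msupp A) :
    A * Ap = P :=
  h.isStarProjection_mul.eq_of_range_toEuclideanLin_eq hP <| by
    rw [h.range_toEuclideanLin_mul, hA.range_toEuclideanLin, hr]

end IsMPInv

section absoluteValue

variable {C Tp : Matrix n n ℂ}

theorem mul_mul_psqrt_conjTranspose_mul_self (hTp : IsMPInv (psqrt (Cᴴ * C)) Tp) :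
    C * (Tp * psqrt (Cᴴ * C)) = C := by
  set T := psqrt (Cᴴ * C)
  have hTT : T * T = Cᴴ * C := psqrt_mul_psqrt (posSemidef_conjTranspose_mul_self C)
  have h : C * (1 - Tp * T) = 0 := mul_eq_zero_of_conjTranspose_mul_self_mul_eq_zero <| by
    rw [← hTT, mul_sub, mul_one, mul_assoc T, ← mul_assoc T Tp, hTp.1, sub_self]
  rwa [mul_sub, mul_one, sub_eq_zero, eq_comm] at h

theorem psqrt_mul_conjTranspose_self (hTp : IsMPInv (psqrt (Cᴴ * C)) Tp) :
    psqrt (C * Cᴴ) = C * Tp * Cᴴ := by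
  set T := psqrt (Cᴴ * C)
  have hT : T.PosSemidef := (posSemidef_conjTranspose_mul_self C).psqrt
  have hTT : T * T = Cᴴ * C := psqrt_mul_psqrt (posSemidef_conjTranspose_mul_self C)
  have hsq : C * Tp * Cᴴ * (C * Tp * Cᴴ) = C * Cᴴ := calc
    _ = C * Tp * (Cᴴ * C) * Tp * Cᴴ := by simp only [mul_assoc]
    _ = C * (Tp * T) * (C * (Tp * T))ᴴ := by
      rw [← hTT, conjTranspose_mul, conjTranspose_mul, hT.isHermitian.eq,
        (hTp.isHermitian hT.isHermitian).eq]
      simp only [mul_assoc]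
    _ = C * Cᴴ := by rw [mul_mul_psqrt_conjTranspose_mul_self hTp]
  rw [← hsq, psqrt_mul_self ((hTp.posSemidef hT).mul_mul_conjTranspose_same C)]

end absoluteValue

theorem isMPInv_mul_psqrt_mul {C u v : Matrix n n ℂ} (hu : u.IsHermitian) (hv : v.IsHermitian)
    (hC : C * v * u * C = C) (huCv : (u * C * v).IsHermitian) :
    IsMPInv (u * psqrt (C * Cᴴ) * u) (v * psqrt (Cᴴ * C) * v) := by
  set T := psqrt (Cᴴ * C)
  have hN := posSemidef_conjTranspose_mul_self C
  have hT : T.PosSemidef := hN.psqrt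
  obtain ⟨Tp, hTp⟩ : ∃ Tp, IsMPInv T Tp := ⟨_, hT.isHermitian.isMPInv_cfc_inv⟩
  have hTT : T * T = Cᴴ * C := psqrt_mul_psqrt hN
  have hc := hTp.mul_comm_of_isHermitian hT.isHermitian
  have hT₁ : T = Tp * (Cᴴ * C) := by rw [← hTT, ← mul_assoc, ← hc, hTp.1]
  have hT₂ : T = Cᴴ * C * Tp := by rw [← hTT, mul_assoc, hc, ← mul_assoc, hTp.1]
  have hC' : Cᴴ * u * v * Cᴴ = Cᴴ := by
    simpa only [conjTranspose_mul, hu.eq, hv.eq, mul_assoc] using congrArg (·ᴴ) hC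
  rw [psqrt_mul_conjTranspose_self hTp]
  have hXY : u * (C * Tp * Cᴴ) * u * (v * T * v) = u * C * v := calc
    _ = u * C * Tp * (Cᴴ * u * v * Cᴴ) * C * Tp * v := by rw [hT₂]; simp only [mul_assoc]
    _ = u * (C * (Tp * T)) * v := by rw [hC', hT₂]; simp only [mul_assoc]
    _ = u * C * v := by rw [mul_mul_psqrt_conjTranspose_mul_self hTp]
  have hYX : v * T * v * (u * (C * Tp * Cᴴ) * u) = u * C * v := calc
    _ = (u * (C * Tp * Cᴴ) * u * (v * T * v))ᴴ := by
      simp only [conjTranspose_mul, conjTranspose_conjTranspose, hu.eq, hv.eq, hT.isHermitian.eq,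
        (hTp.isHermitian hT.isHermitian).eq, mul_assoc]
    _ = u * C * v := by rw [hXY, huCv.eq]
  refine ⟨?_, ?_, by rw [hXY]; exact huCv, by rw [hYX]; exact huCv⟩
  · calc _ = u * C * v * (u * (C * Tp * Cᴴ) * u) := by rw [hXY]
      _ = u * (C * v * u * C) * Tp * Cᴴ * u := by simp only [mul_assoc]
      _ = u * (C * Tp * Cᴴ) * u := by rw [hC]; simp only [mul_assoc]
  · calc _ = v * T * v * (u * C * v) := by rw [mul_assoc _ (u * _ * u), hXY]
      _ = v * Tp * Cᴴ * (C * v * u * C) * v := by rw [hT₁]; simp only [mul_assoc]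
      _ = v * T * v := by rw [hC, hT₁]; simp only [mul_assoc]

theorem isMPInv_mul_psqrt_mul_of_commute {a a' b b' : Matrix n n ℂ} (ha : IsMPInv a a')
    (hb : IsMPInv b b') (haH : a.IsHermitian) (hb'H : b'.IsHermitian)
    (hc : Commute (a * a') (b * b')) :
    IsMPInv (a * psqrt (a' * b * (a' * b)ᴴ) * a) (b' * psqrt ((a' * b)ᴴ * (a' * b)) * b') := by
  refine isMPInv_mul_psqrt_mul haH hb'H ?_ ?_
  · calc a' * b * b' * a * (a' * b) = a' * (b * b' * (a * a')) * b := by simp only [mul_assoc]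
      _ = a' * a * a' * (b * b' * b) := by rw [← hc.eq]; simp only [mul_assoc]
      _ = a' * b := by rw [ha.2.1, hb.1]
  · rw [IsHermitian, show a * (a' * b) * b' = a * a' * (b * b') by simp only [mul_assoc],
      conjTranspose_mul, ha.2.2.1, hb.2.2.1, hc.eq]

theorem geoMean_eq {A Ap B : Matrix n n ℂ} (hAp : Ap.PosSemidef) (hB : B.PosSemidef) :
    geoMean A Ap B = psqrt A * psqrt (psqrt Ap * psqrt B * (psqrt Ap * psqrt B)ᴴ) * psqrt A := by
  rw [geoMean, conjTranspose_mul, hAp.psqrt.isHermitian.eq, hB.psqrt.isHermitian.eq]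
  conv_lhs => rw [← psqrt_mul_psqrt hB]
  simp only [mul_assoc]

end

/-- If the support projections of A and B commute, then M(B⁺,A⁺) is the
Moore–Penrose pseudoinverse of M(A,B). -/
theorem geoMean_inv_isMPInv_of_proj_commute
    {n : Type*} [Fintype n] [DecidableEq n]
    (A B Ap Bp PiA PiB : Matrix n n ℂ) (hA : A.PosSemidef) (hB : B.PosSemidef)
    (hAp : IsMPInv A Ap) (hBp : IsMPInv B Bp)
    (hAherm : PiA.IsHermitian) (hAidem : PiA * PiA = PiA)
    (hArange : LinearMap.range (Matrix.toEuclideanLin PiA) = msupp A)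
    (hBherm : PiB.IsHermitian) (hBidem : PiB * PiB = PiB)
    (hBrange : LinearMap.range (Matrix.toEuclideanLin PiB) = msupp B)
    (hcomm : PiA * PiB = PiB * PiA) :
    IsMPInv (geoMean A Ap B) (geoMean Bp B Ap) := by
  have hPiA : psqrt A * psqrt Ap = PiA := by
    rw [← hAp.mul_eq_psqrt_mul_psqrt hA]
    exact hAp.mul_eq_of_range_eq_msupp hA.isHermitian ⟨hAidem, hAherm⟩ hArange
  have hPiB : psqrt B * psqrt Bp = PiB := by
    rw [← hBp.mul_eq_psqrt_mul_psqrt hB]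
    exact hBp.mul_eq_of_range_eq_msupp hB.isHermitian ⟨hBidem, hBherm⟩ hBrange
  have hAp' := hAp.posSemidef hA
  rw [geoMean_eq hAp' hB, geoMean_eq hB hAp']
  have hC : psqrt B * psqrt Ap = (psqrt Ap * psqrt B)ᴴ := by
    rw [conjTranspose_mul, hB.psqrt.isHermitian.eq, hAp'.psqrt.isHermitian.eq]
  rw [hC, conjTranspose_conjTranspose]
  exact isMPInv_mul_psqrt_mul_of_commute (hAp.psqrt hA) (hBp.psqrt hB) hA.psqrt.isHermitian
    (hBp.posSemidef hB).psqrt.isHermitian (by rw [Commute, SemiconjBy, hPiA, hPiB, hcomm])
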